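/- arXiv:1705.01466 — 3 statements merged into one kernel-verified Lean document; each statement's English description precedes it below -/
import Mathlib

section
/- Let M ≥ 1 be an integer and let F : ℝ^M → ℝ be strictly convex on ℝ^M (i.e., F(λx + (1−λ)y) < λF(x) + (1−λ)F(y) for all x ≠ y and λ ∈ (0,1)). Let μ ∈ (0,1), let a ∈ ℝ^M, and let (a_j) be a sequence in ℝ^M such that μ·F(a_j) + (1−μ)·F(a) − F(μ·a_j + (1−μ)·a) → 0 as j → ∞. Then a_j → a. -/
/-!
The convexity gap `G x = μ F x + (1 - μ) F a - F (μ x + (1 - μ) a)` is continuous, vanishes only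
at `x = a`, and is nondecreasing along every ray issuing from `a`: restricted to such a ray, the
secant slopes of the convex function `F` over `[μ s, μ t]` are at most those over `[s, t]`. Hence
`G` is bounded below on `{x | ε ≤ dist x a}` by its minimum over the compact sphere of radius `ε`,
which is positive, so `G (a_j) → 0` forces `a_j` into every ball around `a`.
-/

open Filter Topology Set AffineMap

lemma ConvexOn.map_mul_sub_map_mul_le {φ : ℝ → ℝ} (hφ : ConvexOn ℝ (Ici 0) φ) {μ s t : ℝ}
    (hμ0 : 0 < μ) (hμ1 : μ ≤ 1) (hs : 0 ≤ s) (hst : s ≤ t) :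
    φ (μ * t) - φ (μ * s) ≤ μ * (φ t - φ s) := by
  rcases hst.eq_or_lt with rfl | hst
  · simp
  have ht : 0 ≤ t := hs.trans hst.le
  have hμs : μ * s ≤ s := mul_le_of_le_one_left hs hμ1
  have hμst : μ * s < μ * t := by gcongr
  have hμt : μ * t ≤ t := mul_le_of_le_one_left ht hμ1
  have hslope : slope φ (μ * s) (μ * t) ≤ slope φ s t := calc
    slope φ (μ * s) (μ * t) ≤ slope φ (μ * s) t :=
      hφ.slope_mono (mem_Ici.2 (by positivity)) ⟨mem_Ici.2 (by positivity), hμst.ne'⟩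
        ⟨mem_Ici.2 ht, (hμs.trans_lt hst).ne'⟩ hμt
    _ = slope φ t (μ * s) := slope_comm _ _ _
    _ ≤ slope φ t s :=
      hφ.slope_mono (mem_Ici.2 ht) ⟨mem_Ici.2 (by positivity), (hμs.trans_lt hst).ne⟩
        ⟨mem_Ici.2 hs, hst.ne⟩ hμs
    _ = slope φ s t := slope_comm _ _ _
  rw [slope_def_field, slope_def_field, div_le_div_iff₀ (by linarith) (by linarith)] at hslope
  nlinarith

section ConvexityGap

variable {E : Type*} [NormedAddCommGroup E] [NormedSpace ℝ E]

noncomputable def convexityGap (F : E → ℝ) (μ : ℝ) (a x : E) : ℝ :=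
  μ * F x + (1 - μ) * F a - F (μ • x + (1 - μ) • a)

variable {F : E → ℝ} {μ : ℝ} {a : E}

lemma convexityGap_pos (hF : StrictConvexOn ℝ univ F) (hμ0 : 0 < μ) (hμ1 : μ < 1) {x : E}
    (hx : x ≠ a) : 0 < convexityGap F μ a x := by
  have := hF.2 (mem_univ x) (mem_univ a) hx hμ0 (sub_pos.2 hμ1) (add_sub_cancel μ 1)
  rw [convexityGap, sub_pos]
  simpa only [smul_eq_mul] using this

lemma continuous_convexityGap [FiniteDimensional ℝ E] (hF : ConvexOn ℝ univ F) :
    Continuous (convexityGap F μ a) := by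
  have : Continuous F := continuousOn_univ.1 (hF.continuousOn isOpen_univ)
  unfold convexityGap
  fun_prop

lemma smul_lineMap_add_one_sub_smul (x : E) (μ r : ℝ) :
    μ • lineMap a x r + (1 - μ) • a = lineMap a x (μ * r) := by
  simp only [lineMap_apply_module']
  module

lemma convexityGap_lineMap_mono (hF : ConvexOn ℝ univ F) (hμ0 : 0 < μ) (hμ1 : μ ≤ 1) (x : E)
    {s t : ℝ} (hs : 0 ≤ s) (hst : s ≤ t) :
    convexityGap F μ a (lineMap a x s) ≤ convexityGap F μ a (lineMap a x t) := by
  have hφ : ConvexOn ℝ (Ici (0 : ℝ)) (F ∘ lineMap a x) :=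
    (hF.comp_affineMap (lineMap a x)).subset (subset_univ _) (convex_Ici 0)
  have := hφ.map_mul_sub_map_mul_le hμ0 hμ1 hs hst
  simp only [convexityGap, smul_lineMap_add_one_sub_smul]
  simp only [Function.comp_apply] at this
  linarith

lemma exists_pos_le_convexityGap [FiniteDimensional ℝ E] (hF : StrictConvexOn ℝ univ F)
    (hμ0 : 0 < μ) (hμ1 : μ < 1) {ε : ℝ} (hε : 0 < ε) :
    ∃ c > 0, ∀ x, ε ≤ dist x a → c ≤ convexityGap F μ a x := by
  obtain ⟨c, hc, hcK⟩ := (isCompact_sphere a ε).exists_forall_le'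
    (continuous_convexityGap hF.convexOn).continuousOn
    fun y hy ↦ convexityGap_pos hF hμ0 hμ1 (Metric.ne_of_mem_sphere hy hε.ne')
  refine ⟨c, hc, fun x hx ↦ ?_⟩
  have hxa : 0 < dist x a := hε.trans_le hx
  have hy : lineMap a x (ε / dist x a) ∈ Metric.sphere a ε := by
    rw [Metric.mem_sphere, dist_lineMap_left, Real.norm_of_nonneg (by positivity), dist_comm a x,
      div_mul_cancel₀ _ hxa.ne']
  calc c ≤ convexityGap F μ a (lineMap a x (ε / dist x a)) := hcK _ hy
    _ ≤ convexityGap F μ a (lineMap a x 1) :=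
      convexityGap_lineMap_mono hF.convexOn hμ0 hμ1.le x (by positivity)
        ((div_le_one hxa).2 hx)
    _ = convexityGap F μ a x := by rw [lineMap_apply_one]

end ConvexityGap

theorem stmt2_general (M : ℕ)
    (F : EuclideanSpace ℝ (Fin M) → ℝ)
    (hF : StrictConvexOn ℝ (Set.univ : Set (EuclideanSpace ℝ (Fin M))) F)
    (μ : ℝ) (hμ0 : 0 < μ) (hμ1 : μ < 1)
    (a : EuclideanSpace ℝ (Fin M)) (aj : ℕ → EuclideanSpace ℝ (Fin M))
    (hconv : Tendsto (fun j => μ * F (aj j) + (1 - μ) * F a - F (μ • aj j + (1 - μ) • a))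
      atTop (𝓝 0)) :
    Tendsto aj atTop (𝓝 a) := by
  refine Metric.tendsto_nhds.2 fun ε hε ↦ ?_
  obtain ⟨c, hc, hgap⟩ := exists_pos_le_convexityGap hF hμ0 hμ1 hε
  filter_upwards [hconv.eventually_lt_const hc] with j hj
  by_contra! hfar
  exact (hgap (aj j) hfar).not_gt hj

/-- If `F : ℝ^M → ℝ` is strictly convex, `μ ∈ (0,1)` and
`μ F(a_j) + (1-μ) F(a) - F(μ a_j + (1-μ) a) → 0`, then `a_j → a`. -/
theorem stmt2 (M : ℕ) (hM : 1 ≤ M)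
    (F : EuclideanSpace ℝ (Fin M) → ℝ)
    (hF : StrictConvexOn ℝ (Set.univ : Set (EuclideanSpace ℝ (Fin M))) F)
    (μ : ℝ) (hμ0 : 0 < μ) (hμ1 : μ < 1)
    (a : EuclideanSpace ℝ (Fin M)) (aj : ℕ → EuclideanSpace ℝ (Fin M))
    (hconv : Tendsto (fun j => μ * F (aj j) + (1 - μ) * F a - F (μ • aj j + (1 - μ) • a))
      atTop (𝓝 0)) :
    Tendsto aj atTop (𝓝 a) :=
  stmt2_general M F hF μ hμ0 hμ1 a aj hconv
end

section
/- Let n > r ≥ 1 be integers, let p ≥ 1 be a real number, and let R > 0. Write points of ℝ^n = ℝ^r × ℝ^{n−r} as x = (x', x''). Let v : ℝ^r × ℝ^{n−r} → ℝ be a continuously differentiable function with compact support such that v(x', x'') = 0 whenever ‖x''‖ ≥ R. Then ∫_{ℝ^n} |v(x)|^p dx ≤ (2R)^p · ∫_{ℝ^n} ‖∇''v(x)‖^p dx, where ∇''v(x) denotes the derivative at x'' of the partial map y ↦ v(x', y), i.e., the gradient of v in the last n−r variables. -/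
open MeasureTheory Set ENNReal

/-! Fix a unit vector `e` of the vertical factor. If `v x ≠ 0` then `‖x''‖ < R`, so `v` vanishes at
`x + 2R • (0, e)`, and the fundamental theorem of calculus on that segment bounds `|v x|` by
`∫₀^{2R} |∂ₑ v (x + s • (0, e))| ds`, where `∂ₑ v` is the derivative of `v` in the direction
`(0, e)`. Hölder's inequality on the segment, integration in `x`, and Tonelli plus translation
invariance of Lebesgue measure give `∫ |v|^p ≤ (2R)^p ∫ |∂ₑ v|^p`; finally `|∂ₑ v| ≤ ‖∇''v‖`. -/

theorem rpow_lintegral_le_measure_univ_rpow_mul {α : Type*} [MeasurableSpace α] (μ : Measure α)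
    {p : ℝ} (hp : 1 ≤ p) {f : α → ℝ≥0∞} (hf : AEMeasurable f μ) :
    (∫⁻ a, f a ∂μ) ^ p ≤ μ univ ^ (p - 1) * ∫⁻ a, f a ^ p ∂μ := by
  have hp0 : 0 < p := by linarith
  have h := lintegral_mul_norm_pow_le (hf.pow_const p) (aemeasurable_const (b := (1 : ℝ≥0∞)))
    (inv_nonneg.2 hp0.le) (sub_nonneg.2 (inv_le_one_of_one_le₀ hp)) (add_sub_cancel _ 1)
  simp only [← ENNReal.rpow_mul, mul_inv_cancel₀ hp0.ne', ENNReal.rpow_one, ENNReal.one_rpow,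
    mul_one, lintegral_const, one_mul] at h
  calc (∫⁻ a, f a ∂μ) ^ p
      ≤ ((∫⁻ a, f a ^ p ∂μ) ^ p⁻¹ * μ univ ^ (1 - p⁻¹)) ^ p := ENNReal.rpow_le_rpow h hp0.le
    _ = μ univ ^ (p - 1) * ∫⁻ a, f a ^ p ∂μ := by
      rw [ENNReal.mul_rpow_of_nonneg _ _ hp0.le, ← ENNReal.rpow_mul, ← ENNReal.rpow_mul,
        inv_mul_cancel₀ hp0.ne', ENNReal.rpow_one, sub_mul, one_mul, inv_mul_cancel₀ hp0.ne',
        mul_comm]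

theorem integral_le_mul_integral_of_lintegral_le {α : Type*} [MeasurableSpace α] {μ : Measure α}
    {f g : α → ℝ} (hf : 0 ≤ᵐ[μ] f) (hfm : AEStronglyMeasurable f μ) (hg : 0 ≤ᵐ[μ] g)
    (hgi : Integrable g μ) {c : ℝ} (hc : 0 ≤ c)
    (h : ∫⁻ a, ENNReal.ofReal (f a) ∂μ ≤ ENNReal.ofReal c * ∫⁻ a, ENNReal.ofReal (g a) ∂μ) :
    ∫ a, f a ∂μ ≤ c * ∫ a, g a ∂μ := by
  rw [integral_eq_lintegral_of_nonneg_ae hf hfm, integral_eq_lintegral_of_nonneg_ae hg hgi.1,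
    ← ENNReal.toReal_ofReal hc, ← ENNReal.toReal_mul]
  exact ENNReal.toReal_mono (ENNReal.mul_ne_top ofReal_ne_top hgi.lintegral_lt_top.ne) h

section Directional

variable {E : Type*} [NormedAddCommGroup E] [NormedSpace ℝ E]

theorem abs_le_intervalIntegral_abs_fderiv_apply {u : E → ℝ} (hu : ContDiff ℝ 1 u) (x e : E)
    {L : ℝ} (hL : 0 ≤ L) (hxL : u (x + L • e) = 0) :
    |u x| ≤ ∫ s in 0..L, |fderiv ℝ u (x + s • e) e| := by
  have hderiv (s : ℝ) :
      HasDerivAt (fun t : ℝ => u (x + t • e)) (fderiv ℝ u (x + s • e) e) s := by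
    have hline : HasDerivAt (fun t : ℝ => x + t • e) e s := by
      simpa using ((hasDerivAt_id s).smul_const e).const_add x
    exact (hu.differentiable one_ne_zero _).hasFDerivAt.comp_hasDerivAt s hline
  have hcont : Continuous fun s : ℝ => fderiv ℝ u (x + s • e) e :=
    ((hu.continuous_fderiv one_ne_zero).comp (by fun_prop)).clm_apply continuous_const
  have hftc := intervalIntegral.integral_eq_sub_of_hasDerivAt (fun s _ => hderiv s)
    (hcont.intervalIntegrable 0 L)
  rw [hxL, zero_smul, add_zero, zero_sub] at hftc
  calc |u x| = |∫ s in 0..L, fderiv ℝ u (x + s • e) e| := by rw [hftc, abs_neg]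
    _ ≤ _ := intervalIntegral.abs_integral_le_integral_abs hL

theorem ofReal_abs_rpow_le_lintegral_Ioc {u : E → ℝ} (hu : ContDiff ℝ 1 u) (x e : E)
    {p L : ℝ} (hp : 1 ≤ p) (hL : 0 ≤ L) (hxL : u (x + L • e) = 0) :
    ENNReal.ofReal (|u x| ^ p) ≤ ENNReal.ofReal L ^ (p - 1) *
      ∫⁻ s in Ioc (0 : ℝ) L, ENNReal.ofReal (|fderiv ℝ u (x + s • e) e| ^ p) := by
  have hp0 : 0 ≤ p := by linarith
  have hcont : Continuous fun s : ℝ => |fderiv ℝ u (x + s • e) e| :=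
    (((hu.continuous_fderiv one_ne_zero).comp (by fun_prop)).clm_apply continuous_const).abs
  have hftc :
      ENNReal.ofReal |u x| ≤ ∫⁻ s in Ioc (0 : ℝ) L, ENNReal.ofReal |fderiv ℝ u (x + s • e) e| := by
    rw [← ofReal_integral_eq_lintegral_ofReal hcont.integrableOn_Ioc
      (ae_of_all _ fun _ => abs_nonneg _), ← intervalIntegral.integral_of_le hL]
    exact ENNReal.ofReal_le_ofReal (abs_le_intervalIntegral_abs_fderiv_apply hu x e hL hxL)
  have hholder := rpow_lintegral_le_measure_univ_rpow_mul (volume.restrict (Ioc (0 : ℝ) L)) hp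
    (ENNReal.measurable_ofReal.comp_aemeasurable hcont.aemeasurable)
  rw [Measure.restrict_apply_univ, Real.volume_Ioc, sub_zero] at hholder
  calc ENNReal.ofReal (|u x| ^ p) = ENNReal.ofReal |u x| ^ p :=
        (ENNReal.ofReal_rpow_of_nonneg (abs_nonneg _) hp0).symm
    _ ≤ (∫⁻ s in Ioc (0 : ℝ) L, ENNReal.ofReal |fderiv ℝ u (x + s • e) e|) ^ p :=
        ENNReal.rpow_le_rpow hftc hp0
    _ ≤ _ := by
        simpa only [Function.comp_apply, ENNReal.ofReal_rpow_of_nonneg, abs_nonneg, hp0]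
          using hholder

variable [MeasurableSpace E] [BorelSpace E] [SecondCountableTopology E] (μ : Measure E)
  [μ.IsAddRightInvariant] [SFinite μ]

theorem lintegral_lintegral_Ioc_add_smul {f : E → ℝ≥0∞} (hf : Measurable f) (e : E) (L : ℝ) :
    ∫⁻ x, (∫⁻ s in Ioc (0 : ℝ) L, f (x + s • e)) ∂μ = ENNReal.ofReal L * ∫⁻ x, f x ∂μ := by
  have hmeas : AEMeasurable (Function.uncurry fun x (s : ℝ) => f (x + s • e))
      (μ.prod (volume.restrict (Ioc 0 L))) :=
    (hf.comp (measurable_fst.add (measurable_snd.smul_const e))).aemeasurable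
  rw [lintegral_lintegral_swap hmeas]
  simp only [lintegral_add_right_eq_self (μ := μ) f, lintegral_const, Measure.restrict_apply_univ,
    Real.volume_Ioc, sub_zero, mul_comm]

theorem lintegral_abs_rpow_le_of_add_smul_eq_zero {u : E → ℝ} (hu : ContDiff ℝ 1 u) {e : E}
    {p L : ℝ} (hp : 1 ≤ p) (hL : 0 ≤ L) (hvan : ∀ x, u x ≠ 0 → u (x + L • e) = 0) :
    ∫⁻ x, ENNReal.ofReal (|u x| ^ p) ∂μ
      ≤ ENNReal.ofReal (L ^ p) * ∫⁻ x, ENNReal.ofReal (|fderiv ℝ u x e| ^ p) ∂μ := by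
  have hp0 : 0 < p := by linarith
  have hmeas : Measurable fun x => ENNReal.ofReal (|fderiv ℝ u x e| ^ p) :=
    (((hu.continuous_fderiv one_ne_zero).clm_apply continuous_const).abs.rpow_const
      fun _ => Or.inr hp0.le).measurable.ennreal_ofReal
  have hpointwise (x : E) : ENNReal.ofReal (|u x| ^ p) ≤ ENNReal.ofReal L ^ (p - 1) *
      ∫⁻ s in Ioc (0 : ℝ) L, ENNReal.ofReal (|fderiv ℝ u (x + s • e) e| ^ p) := by
    by_cases hx : u x = 0
    · simp [hx, Real.zero_rpow hp0.ne']
    · exact ofReal_abs_rpow_le_lintegral_Ioc hu x e hp hL (hvan x hx)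
  calc ∫⁻ x, ENNReal.ofReal (|u x| ^ p) ∂μ
      ≤ ∫⁻ x, ENNReal.ofReal L ^ (p - 1) *
          (∫⁻ s in Ioc (0 : ℝ) L, ENNReal.ofReal (|fderiv ℝ u (x + s • e) e| ^ p)) ∂μ :=
        lintegral_mono hpointwise
    _ = ENNReal.ofReal L ^ (p - 1) * ENNReal.ofReal L *
          ∫⁻ x, ENNReal.ofReal (|fderiv ℝ u x e| ^ p) ∂μ := by
        rw [lintegral_const_mul' _ _ (ENNReal.rpow_ne_top_of_nonneg (by linarith) ofReal_ne_top),
          lintegral_lintegral_Ioc_add_smul μ hmeas, mul_assoc]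
    _ = _ := by
        rw [ENNReal.ofReal_rpow_of_nonneg hL (by linarith), ← ENNReal.ofReal_mul (by positivity),
          ← Real.rpow_add_one' hL (by linarith), sub_add_cancel]

end Directional

theorem fderiv_comp_prodMk_right {𝕜 E F G : Type*} [NontriviallyNormedField 𝕜]
    [NormedAddCommGroup E] [NormedSpace 𝕜 E] [NormedAddCommGroup F] [NormedSpace 𝕜 F]
    [NormedAddCommGroup G] [NormedSpace 𝕜 G] {f : E × F → G} {x : E × F}
    (hf : DifferentiableAt 𝕜 f x) :
    fderiv 𝕜 (fun y => f (x.1, y)) x.2 = (fderiv 𝕜 f x).comp (.inr 𝕜 E F) :=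
  (hf.hasFDerivAt.comp x.2 (hasFDerivAt_prodMk_right x.1 x.2)).fderiv

theorem HasCompactSupport.integrable_norm_fderiv_comp_inr_rpow {E F : Type*}
    [NormedAddCommGroup E] [NormedSpace ℝ E] [NormedAddCommGroup F] [NormedSpace ℝ F]
    [MeasurableSpace (E × F)] [OpensMeasurableSpace (E × F)] {μ : Measure (E × F)}
    [IsFiniteMeasureOnCompacts μ] {f : E × F → ℝ} (hf : ContDiff ℝ 1 f)
    (hsupp : HasCompactSupport f) {p : ℝ} (hp : 0 < p) :
    Integrable (fun x => ‖(fderiv ℝ f x).comp (.inr ℝ E F)‖ ^ p) μ := by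
  refine Continuous.integrable_of_hasCompactSupport ?_ ?_
  · exact ((hf.continuous_fderiv one_ne_zero).clm_comp continuous_const).norm.rpow_const
      fun _ => Or.inr hp.le
  · refine (hsupp.fderiv (𝕜 := ℝ)).mono fun x hx hx0 => hx ?_
    simp [show fderiv ℝ f x = 0 from hx0, Real.zero_rpow hp.ne']

theorem le_norm_add_two_mul_smul {F : Type*} [NormedAddCommGroup F] [NormedSpace ℝ F] {y e : F}
    {R : ℝ} (he : ‖e‖ = 1) (hy : ‖y‖ < R) : R ≤ ‖y + (2 * R) • e‖ := by
  have h := norm_sub_le_norm_add ((2 * R) • e) y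
  rw [norm_smul, he, mul_one, add_comm] at h
  linarith [le_abs_self (2 * R), Real.norm_eq_abs (2 * R)]

theorem stmt15_general (n r : ℕ) (hrn : r < n) (p R : ℝ) (hp : 1 ≤ p) (hR : 0 < R)
    (v : EuclideanSpace ℝ (Fin r) × EuclideanSpace ℝ (Fin (n - r)) → ℝ)
    (hv : ContDiff ℝ 1 v) (hsupp : HasCompactSupport v)
    (hvan : ∀ x : EuclideanSpace ℝ (Fin r) × EuclideanSpace ℝ (Fin (n - r)),
      R ≤ ‖x.2‖ → v x = 0) :
    ∫ x : EuclideanSpace ℝ (Fin r) × EuclideanSpace ℝ (Fin (n - r)), |v x| ^ p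
      ≤ (2 * R) ^ p *
        ∫ x : EuclideanSpace ℝ (Fin r) × EuclideanSpace ℝ (Fin (n - r)),
          ‖fderiv ℝ (fun y => v (x.1, y)) x.2‖ ^ p := by
  have hp0 : 0 < p := by linarith
  have : Nonempty (Fin (n - r)) := ⟨⟨0, by omega⟩⟩
  obtain ⟨e, he⟩ := exists_norm_eq (EuclideanSpace ℝ (Fin (n - r))) zero_le_one
  have hpartial (x : EuclideanSpace ℝ (Fin r) × EuclideanSpace ℝ (Fin (n - r))) :=
    fderiv_comp_prodMk_right (hv.differentiable one_ne_zero x)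
  have hshift (x : EuclideanSpace ℝ (Fin r) × EuclideanSpace ℝ (Fin (n - r))) (hx : v x ≠ 0) :
      v (x + (2 * R) • (0, e)) = 0 :=
    hvan _ <| by simpa using le_norm_add_two_mul_smul he (lt_of_not_ge fun h => hx (hvan x h))
  -- instance search does not unfold `volume` on a product to `volume.prod volume`
  have : (volume : Measure (EuclideanSpace ℝ (Fin r) × EuclideanSpace ℝ (Fin (n - r)))
      ).IsAddRightInvariant := Measure.prod.instIsAddRightInvariant
  simp only [hpartial]
  refine integral_le_mul_integral_of_lintegral_le (ae_of_all _ fun _ => by positivity)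
    (hv.continuous.abs.rpow_const fun _ => Or.inr hp0.le).aestronglyMeasurable
    (ae_of_all _ fun _ => by positivity) (hsupp.integrable_norm_fderiv_comp_inr_rpow hv hp0)
    (by positivity) ?_
  calc ∫⁻ x, ENNReal.ofReal (|v x| ^ p)
      ≤ ENNReal.ofReal ((2 * R) ^ p) * ∫⁻ x, ENNReal.ofReal (|fderiv ℝ v x (0, e)| ^ p) :=
        lintegral_abs_rpow_le_of_add_smul_eq_zero volume hv hp (by positivity) hshift
    _ ≤ _ := by
        gcongr with x
        simpa [he] using ((fderiv ℝ v x).comp (.inr ℝ _ _)).le_opNorm e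

/-- Vertical Poincaré inequality: for `v : ℝ^r × ℝ^{n-r} → ℝ` continuously differentiable with
compact support, vanishing where `‖x''‖ ≥ R`, one has
`∫ |v|^p ≤ (2R)^p ∫ ‖∇''v‖^p`, where `∇''v` is the gradient of `v` in the last `n-r`
variables. -/
theorem stmt15 (n r : ℕ) (hr : 1 ≤ r) (hrn : r < n) (p R : ℝ) (hp : 1 ≤ p) (hR : 0 < R)
    (v : EuclideanSpace ℝ (Fin r) × EuclideanSpace ℝ (Fin (n - r)) → ℝ)
    (hv : ContDiff ℝ 1 v) (hsupp : HasCompactSupport v)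
    (hvan : ∀ x : EuclideanSpace ℝ (Fin r) × EuclideanSpace ℝ (Fin (n - r)),
      R ≤ ‖x.2‖ → v x = 0) :
    ∫ x : EuclideanSpace ℝ (Fin r) × EuclideanSpace ℝ (Fin (n - r)), |v x| ^ p
      ≤ (2 * R) ^ p *
        ∫ x : EuclideanSpace ℝ (Fin r) × EuclideanSpace ℝ (Fin (n - r)),
          ‖fderiv ℝ (fun y => v (x.1, y)) x.2‖ ^ p :=
  stmt15_general n r hrn p R hp hR v hv hsupp hvan
end

section
/- Let p ≥ 2 be a real number and m ≥ 1 an integer. Then there exists a constant β > 0, depending only on p and m, such that for all ξ, ζ ∈ ℝ^m and all θ, μ ∈ [0,1] with θ + μ = 1, one has ‖θξ + μζ‖^p ≤ θ·‖ξ‖^p + μ·‖ζ‖^p − β·θ·μ·(θ^(p−1) + μ^(p−1))·‖ξ − ζ‖^p. -/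
/-!
For the Euclidean norm, the parallelogram law together with the superadditivity and convexity of
`t ↦ t ^ (p / 2)` gives Clarkson's inequality `2 (‖a‖^p + ‖b‖^p) ≤ ‖a + b‖^p + ‖a - b‖^p`.
Taking `a = (ξ + ζ)/2`, `b = (ξ - ζ)/2`, convexity of `‖·‖^p` at the midpoint holds with the
gap `2^{-p} ‖ξ - ζ‖^p`. For `θ ≤ 1/2`, writing `θξ + μζ = 2θ · (ξ + ζ)/2 + (1 - 2θ) · ζ`
turns this into the gap `2^{1-p} θ ‖ξ - ζ‖^p`, and `θμ(θ^{p-1} + μ^{p-1}) ≤ θμ ≤ min(θ, μ)`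
gives the claim with `β = 2^{1-p}`.
-/

open Set

lemma convexOn_univ_norm_rpow {E : Type*} [NormedAddCommGroup E] [NormedSpace ℝ E] {q : ℝ}
    (hq : 1 ≤ q) : ConvexOn ℝ univ fun x : E => ‖x‖ ^ q := by
  refine ⟨convex_univ, fun x _ y _ a b ha hb hab => ?_⟩
  calc ‖a • x + b • y‖ ^ q ≤ (a * ‖x‖ + b * ‖y‖) ^ q := by
        gcongr
        exact convexOn_univ_norm.2 trivial trivial ha hb hab
    _ ≤ a * ‖x‖ ^ q + b * ‖y‖ ^ q :=
        (convexOn_rpow hq).2 (norm_nonneg x) (norm_nonneg y) ha hb hab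

lemma sq_rpow_div_two {x : ℝ} (hx : 0 ≤ x) (p : ℝ) : (x ^ 2) ^ (p / 2) = x ^ p := by
  rw [← Real.rpow_natCast, ← Real.rpow_mul hx]
  congr 1
  ring

section InnerProductSpace

variable {E : Type*} [NormedAddCommGroup E] [InnerProductSpace ℝ E]

theorem norm_rpow_add_norm_rpow_le_clarkson (a b : E) {p : ℝ} (hp : 2 ≤ p) :
    ‖a‖ ^ p + ‖b‖ ^ p ≤ (‖a + b‖ ^ p + ‖a - b‖ ^ p) / 2 := by
  have hq : 1 ≤ p / 2 := by linarith
  have parallelogram : ‖a‖ ^ 2 + ‖b‖ ^ 2 = 1 / 2 * ‖a + b‖ ^ 2 + 1 / 2 * ‖a - b‖ ^ 2 := by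
    linear_combination (-1 / 2 : ℝ) * parallelogram_law_with_norm ℝ a b
  calc ‖a‖ ^ p + ‖b‖ ^ p = (‖a‖ ^ 2) ^ (p / 2) + (‖b‖ ^ 2) ^ (p / 2) := by
        simp only [sq_rpow_div_two (norm_nonneg _)]
    _ ≤ (‖a‖ ^ 2 + ‖b‖ ^ 2) ^ (p / 2) :=
        Real.add_rpow_le_rpow_add (by positivity) (by positivity) hq
    _ ≤ 1 / 2 * (‖a + b‖ ^ 2) ^ (p / 2) + 1 / 2 * (‖a - b‖ ^ 2) ^ (p / 2) := by
        rw [parallelogram]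
        exact (convexOn_rpow hq).2 (mem_Ici.2 (sq_nonneg _)) (mem_Ici.2 (sq_nonneg _))
          (by norm_num) (by norm_num) (by norm_num)
    _ = (‖a + b‖ ^ p + ‖a - b‖ ^ p) / 2 := by
        simp only [sq_rpow_div_two (norm_nonneg _)]; ring

theorem norm_half_smul_add_rpow_le (x y : E) {p : ℝ} (hp : 2 ≤ p) :
    ‖(1 / 2 : ℝ) • (x + y)‖ ^ p ≤ (‖x‖ ^ p + ‖y‖ ^ p) / 2 - (1 / 2) ^ p * ‖x - y‖ ^ p := by
  have h :=
    norm_rpow_add_norm_rpow_le_clarkson ((1 / 2 : ℝ) • (x + y)) ((1 / 2 : ℝ) • (x - y)) hp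
  rw [show (1 / 2 : ℝ) • (x + y) + (1 / 2 : ℝ) • (x - y) = x by module,
    show (1 / 2 : ℝ) • (x + y) - (1 / 2 : ℝ) • (x - y) = y by module, norm_smul _ (x - y),
    Real.mul_rpow (by norm_num) (norm_nonneg _), Real.norm_of_nonneg (by norm_num)] at h
  linarith

theorem norm_smul_add_smul_rpow_le_of_le_half (x y : E) {p θ μ : ℝ} (hp : 2 ≤ p) (hθ : 0 ≤ θ)
    (hθ_half : θ ≤ 1 / 2) (hθμ : θ + μ = 1) :
    ‖θ • x + μ • y‖ ^ p
      ≤ θ * ‖x‖ ^ p + μ * ‖y‖ ^ p - 2 * (1 / 2) ^ p * θ * ‖x - y‖ ^ p := by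
  obtain rfl : μ = 1 - θ := by linarith
  have hcomb : θ • x + (1 - θ) • y = (2 * θ) • ((1 / 2 : ℝ) • (x + y)) + (1 - 2 * θ) • y := by
    module
  have hconv := (convexOn_univ_norm_rpow (E := E) (by linarith : 1 ≤ p)).2
    (mem_univ ((1 / 2 : ℝ) • (x + y))) (mem_univ y) (by linarith : 0 ≤ 2 * θ)
    (by linarith : 0 ≤ 1 - 2 * θ) (by ring)
  have hmid := mul_le_mul_of_nonneg_left (norm_half_smul_add_rpow_le x y hp)
    (by linarith : 0 ≤ 2 * θ)
  simp only [smul_eq_mul] at hconv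
  rw [hcomb]
  linarith

theorem norm_smul_add_smul_rpow_le_sub_min (x y : E) {p θ μ : ℝ} (hp : 2 ≤ p) (hθ : 0 ≤ θ)
    (hμ : 0 ≤ μ) (hθμ : θ + μ = 1) :
    ‖θ • x + μ • y‖ ^ p
      ≤ θ * ‖x‖ ^ p + μ * ‖y‖ ^ p - 2 * (1 / 2) ^ p * min θ μ * ‖x - y‖ ^ p := by
  rcases le_total θ μ with h | h
  · rw [min_eq_left h]
    exact norm_smul_add_smul_rpow_le_of_le_half x y hp hθ (by linarith) hθμ
  · rw [min_eq_right h, add_comm (θ • x), add_comm (θ * _), norm_sub_rev]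
    exact norm_smul_add_smul_rpow_le_of_le_half y x hp hμ (by linarith) (by linarith)

end InnerProductSpace

lemma mul_mul_rpow_add_rpow_le_min {p θ μ : ℝ} (hp : 2 ≤ p) (hθ : 0 ≤ θ) (hμ : 0 ≤ μ)
    (hθμ : θ + μ = 1) : θ * μ * (θ ^ (p - 1) + μ ^ (p - 1)) ≤ min θ μ := by
  have hθ_le : θ ^ (p - 1) ≤ θ := Real.rpow_le_self_of_le_one hθ (by linarith) (by linarith)
  have hμ_le : μ ^ (p - 1) ≤ μ := Real.rpow_le_self_of_le_one hμ (by linarith) (by linarith)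
  calc θ * μ * (θ ^ (p - 1) + μ ^ (p - 1)) ≤ θ * μ * 1 := by
        gcongr
        linarith
    _ ≤ min θ μ := by
        rw [mul_one]
        exact le_min (mul_le_of_le_one_right hθ (by linarith))
          (mul_le_of_le_one_left hμ (by linarith))

theorem stmt17_general (p : ℝ) (hp : 2 ≤ p) (m : ℕ) :
    ∃ β : ℝ, 0 < β ∧
      ∀ ξ ζ : EuclideanSpace ℝ (Fin m), ∀ θ μ : ℝ,
        θ ∈ Set.Icc (0 : ℝ) 1 → μ ∈ Set.Icc (0 : ℝ) 1 → θ + μ = 1 →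
        ‖θ • ξ + μ • ζ‖ ^ p
          ≤ θ * ‖ξ‖ ^ p + μ * ‖ζ‖ ^ p
            - β * θ * μ * (θ ^ (p - 1) + μ ^ (p - 1)) * ‖ξ - ζ‖ ^ p := by
  refine ⟨2 * (1 / 2) ^ p, by positivity, ?_⟩
  rintro ξ ζ θ μ ⟨hθ, -⟩ ⟨hμ, -⟩ hθμ
  have hweight := mul_le_mul_of_nonneg_left (mul_mul_rpow_add_rpow_le_min hp hθ hμ hθμ)
    (by positivity : 0 ≤ 2 * (1 / 2 : ℝ) ^ p * ‖ξ - ζ‖ ^ p)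
  have hgap := norm_smul_add_smul_rpow_le_sub_min ξ ζ hp hθ hμ hθμ
  linarith

/-- Uniform strict convexity (Clarkson-type) inequality for the `p`-th power of the Euclidean
norm, `p ≥ 2`: there is `β > 0` with
`‖θξ + μζ‖^p ≤ θ‖ξ‖^p + μ‖ζ‖^p - β θ μ (θ^(p-1) + μ^(p-1)) ‖ξ - ζ‖^p`
for all `ξ, ζ` and `θ, μ ∈ [0,1]` with `θ + μ = 1`. -/
theorem stmt17 (p : ℝ) (hp : 2 ≤ p) (m : ℕ) (hm : 1 ≤ m) :
    ∃ β : ℝ, 0 < β ∧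
      ∀ ξ ζ : EuclideanSpace ℝ (Fin m), ∀ θ μ : ℝ,
        θ ∈ Set.Icc (0 : ℝ) 1 → μ ∈ Set.Icc (0 : ℝ) 1 → θ + μ = 1 →
        ‖θ • ξ + μ • ζ‖ ^ p
          ≤ θ * ‖ξ‖ ^ p + μ * ‖ζ‖ ^ p
            - β * θ * μ * (θ ^ (p - 1) + μ ^ (p - 1)) * ‖ξ - ζ‖ ^ p :=
  stmt17_general p hp m
end
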